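/- Fix a real number p with 0 < p < 1 and ε with 0 < ε < 1/2, set q = 1/p, and for each n let r = r(n) = ⌊z(n,p) − ε⌋. Then there exists a constant C'' > 0 (independent of n) such that for all sufficiently large n, T_{(r−1,0,0,r−1)} ≤ C''·(log_q n)⁴/n². In particular r⁴·T_{(r−1,0,0,r−1)} → 0 as n → ∞. -/

import Mathlib

/-
With `α = (r-1, 0, 0, r-1)` one has `F_α = r² r!² (n-2r)(n-2r-1) / n(n-1)⋯(n-2r+1)` and
`L(α) = (r-1)(r-2)`, so Stirling's bound `r! ≤ e √r (r/e)^r` gives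
`T_α ≤ e² q² r³ n² B^r` with `B = (r / (e (n-2r)))² q^(r-3)`.
Since `z` is defined so that `q^z = q (e n / (2 log_q n))²`, the upper bound `r ≤ z - ε`,
together with `r ≤ 2 log_q n` and `n / (n-2r) → 1`, gives `B ≤ q^(-2-ε/2)`; the lower bound
`r > z - ε - 1` turns `q^(-2r)` into `O((log_q n)⁴ / n⁴)`, and the remaining factor
`r³ q^(-εr/2)` tends to `0`. The limit follows because `r ≤ 2 log_q n` and `(log_q n)⁸ / n² → 0`.
-/

open Finset Filter

noncomputable section

/-- `z(n,p) = 2 log_q n − 2 log_q log_q n + 2 log_q (e/2) + 1`, where `q = 1/p`. -/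
def zf (p : ℝ) (n : ℕ) : ℝ :=
  2 * Real.logb p⁻¹ n - 2 * Real.logb p⁻¹ (Real.logb p⁻¹ n)
    + 2 * Real.logb p⁻¹ (Real.exp 1 / 2) + 1

/-- The set `D` of vectors `(a,b,c,d)` of nonnegative integers with
`a+b ≤ r`, `a+c ≤ r`, `c+d ≤ r`, `b+d ≤ r`. -/
def Dset (r : ℕ) : Finset (ℕ × ℕ × ℕ × ℕ) :=
  (Finset.range (r+1) ×ˢ Finset.range (r+1) ×ˢ Finset.range (r+1) ×ˢ Finset.range (r+1)).filter
    (fun α => α.1 + α.2.1 ≤ r ∧ α.1 + α.2.2.1 ≤ r ∧ α.2.2.1 + α.2.2.2 ≤ r ∧ α.2.1 + α.2.2.2 ≤ r)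

/-- The coefficient `F_α` for `α = (a,b,c,d)`. -/
def Fa (n r : ℕ) (α : ℕ × ℕ × ℕ × ℕ) : ℝ :=
  match α with
  | (a, b, c, d) =>
    ((r.factorial : ℝ) / ((a.factorial : ℝ) * c.factorial * (r - a - c).factorial)) *
    ((r.factorial : ℝ) / ((b.factorial : ℝ) * d.factorial * (r - b - d).factorial)) *
    (((n - 2*r).factorial : ℝ) /
      (((r - a - b).factorial : ℝ) * (r - c - d).factorial * (n - 4*r + a + b + c + d).factorial)) /
    ((n.factorial : ℝ) / ((r.factorial : ℝ) * r.factorial * (n - 2*r).factorial))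

/-- `L(α) = C(a,2) + C(b,2) + C(c,2) + C(d,2)`. -/
def La (α : ℕ × ℕ × ℕ × ℕ) : ℕ :=
  α.1.choose 2 + α.2.1.choose 2 + α.2.2.1.choose 2 + α.2.2.2.choose 2

/-- `T_α = F_α · q^{L(α)}` with `q = 1/p`. -/
def Ta (n r : ℕ) (p : ℝ) (α : ℕ × ℕ × ℕ × ℕ) : ℝ := Fa n r α * (p⁻¹) ^ (La α)

open Real
open scoped Nat

theorem Nat.factorial_le_exp_mul_sqrt_mul_pow {n : ℕ} (hn : n ≠ 0) :
    (n ! : ℝ) ≤ exp 1 * √n * (n / exp 1) ^ n := by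
  obtain ⟨k, rfl⟩ := Nat.exists_eq_succ_of_ne_zero hn
  have hseq : Stirling.stirlingSeq (k + 1) ≤ exp 1 / √2 :=
    Stirling.stirlingSeq_one ▸ Stirling.stirlingSeq'_antitone (Nat.zero_le k)
  have hfact : ((k + 1)! : ℝ) =
      Stirling.stirlingSeq (k + 1) * (√2 * √(k + 1 : ℕ) * ((k + 1 : ℕ) / exp 1) ^ (k + 1)) := by
    rw [Stirling.stirlingSeq, ← Real.sqrt_mul zero_le_two]
    field_simp
  rw [hfact]
  calc _ ≤ exp 1 / √2 * (√2 * √(k + 1 : ℕ) * ((k + 1 : ℕ) / exp 1) ^ (k + 1)) := by gcongr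
    _ = _ := by field_simp

theorem pow_two_mul_choose_pred_two {M : Type*} [Monoid M] (x : M) {r : ℕ} (hr : 1 ≤ r) :
    x ^ (2 * (r - 1).choose 2) * (x ^ 3) ^ r = x ^ 2 * (x ^ r) ^ r := by
  rw [← pow_mul, ← pow_mul, ← pow_add, ← pow_add]
  congr 1
  obtain ⟨s, rfl⟩ := Nat.exists_eq_add_of_le' hr
  rw [Nat.add_sub_cancel, Nat.choose_two_right,
    Nat.mul_div_cancel' (Nat.even_mul_pred_self s).two_dvd]
  cases s with
  | zero => rfl
  | succ t => rw [Nat.add_sub_cancel]; ring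

theorem La_pred_zero_zero_pred (r : ℕ) : La (r - 1, 0, 0, r - 1) = 2 * (r - 1).choose 2 := by
  simp [La, two_mul]

theorem Ta_pred_zero_zero_pred_eq (p : ℝ) {n r : ℕ} (hr : 1 ≤ r) (hrn : 4 * r ≤ n) :
    Ta n r p (r - 1, 0, 0, r - 1) = r ^ 2 * (r ! : ℝ) ^ 2 * (n - 2 * r).descFactorial 2 /
      n.descFactorial (2 * r) * p⁻¹ ^ (2 * (r - 1).choose 2) := by
  have h1 : r - (r - 1) = 1 := by omega
  have h3 : n - 4 * r + (r - 1) + 0 + 0 + (r - 1) = n - 2 * r - 2 := by omega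
  have hr! : (r ! : ℝ) = r * (r - 1)! := by
    rw [← Nat.cast_mul, Nat.mul_factorial_pred (by omega)]
  have hm! : ((n - 2 * r - 2)! : ℝ) * (n - 2 * r).descFactorial 2 = (n - 2 * r)! := by
    exact_mod_cast Nat.factorial_mul_descFactorial (by omega)
  have hn! : ((n - 2 * r)! : ℝ) * n.descFactorial (2 * r) = n ! := by
    exact_mod_cast Nat.factorial_mul_descFactorial (by omega)
  simp only [Ta, Fa, La_pred_zero_zero_pred, h3, Nat.sub_zero, h1, Nat.factorial_zero,
    Nat.factorial_one, Nat.cast_one]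
  rw [← hn!, ← hm!, hr!]
  have : ((r - 1)! : ℝ) ≠ 0 := by positivity
  have : ((n - 2 * r - 2)! : ℝ) ≠ 0 := by positivity
  have : ((n - 2 * r).descFactorial 2 : ℝ) ≠ 0 := by
    exact_mod_cast (Nat.descFactorial_pos.2 (by omega)).ne'
  have : (n.descFactorial (2 * r) : ℝ) ≠ 0 := by
    exact_mod_cast (Nat.descFactorial_pos.2 (by omega)).ne'
  field_simp

theorem Ta_pred_zero_zero_pred_le {p : ℝ} (hp : 0 < p) {n r : ℕ} (hr : 1 ≤ r)
    (hrn : 4 * r ≤ n) :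
    Ta n r p (r - 1, 0, 0, r - 1) ≤ exp 1 ^ 2 * p⁻¹ ^ 2 * r ^ 3 * n ^ 2 *
      ((r / (exp 1 * (n - 2 * r))) ^ 2 * p⁻¹ ^ r / p⁻¹ ^ 3) ^ r := by
  have hm : (0 : ℝ) < n - 2 * r := by
    rw [sub_pos]; exact_mod_cast (by omega : 2 * r < n)
  have hr! : (r ! : ℝ) ^ 2 ≤ exp 1 ^ 2 * r * (r / exp 1) ^ (2 * r) := by
    calc (r ! : ℝ) ^ 2 ≤ (exp 1 * √r * (r / exp 1) ^ r) ^ 2 := by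
          gcongr; exact Nat.factorial_le_exp_mul_sqrt_mul_pow (by omega)
      _ = _ := by rw [mul_pow, mul_pow, Real.sq_sqrt (Nat.cast_nonneg r), ← pow_mul, mul_comm r]
  have hD2 : ((n - 2 * r).descFactorial 2 : ℝ) ≤ n ^ 2 := by
    exact_mod_cast (Nat.descFactorial_le_pow _ 2).trans (Nat.pow_le_pow_left (Nat.sub_le _ _) 2)
  have hDn : ((n : ℝ) - 2 * r) ^ (2 * r) ≤ n.descFactorial (2 * r) := by
    calc ((n : ℝ) - 2 * r) ^ (2 * r) ≤ ((n + 1 - 2 * r : ℕ) : ℝ) ^ (2 * r) := by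
          gcongr; push_cast [show 2 * r ≤ n + 1 by omega]; linarith
      _ ≤ _ := by exact_mod_cast Nat.pow_sub_le_descFactorial n (2 * r)
  have hq : p⁻¹ ^ (2 * (r - 1).choose 2) = p⁻¹ ^ 2 * (p⁻¹ ^ r) ^ r / (p⁻¹ ^ 3) ^ r :=
    eq_div_of_mul_eq (by positivity) (pow_two_mul_choose_pred_two p⁻¹ hr)
  rw [Ta_pred_zero_zero_pred_eq p hr hrn]
  calc _ ≤ r ^ 2 * (exp 1 ^ 2 * r * (r / exp 1) ^ (2 * r)) * n ^ 2 / ((n : ℝ) - 2 * r) ^ (2 * r) *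
        p⁻¹ ^ (2 * (r - 1).choose 2) := by gcongr
    _ = _ := by
      rw [hq]
      generalize (n : ℝ) - 2 * r = m
      ring

-- `a` stands for `p ^ (ε / 2)`, the slack left by taking `r ≤ z - ε`.
theorem Ta_pred_zero_zero_pred_le_of_bounds {p a L : ℝ} (hp : 0 < p) (ha : 0 < a) {n r : ℕ}
    (hr : 1 ≤ r) (hrn : 4 * r ≤ n) (hrL : r ≤ 2 * L)
    (hup : p⁻¹ ^ r ≤ p⁻¹ * a ^ 2 * (exp 1 * n / (2 * L)) ^ 2)
    (hlow : a ^ 2 * (exp 1 * n / (2 * L)) ^ 2 ≤ p⁻¹ ^ r)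
    (hm : a * n ^ 2 ≤ (n - 2 * r) ^ 2) :
    Ta n r p (r - 1, 0, 0, r - 1) ≤
      16 * p⁻¹ ^ 2 / (exp 1 ^ 2 * a ^ 4) * (r ^ 3 * a ^ r) * (L ^ 4 / n ^ 2) := by
  have hn : (0 : ℝ) < n := by exact_mod_cast (by omega : 0 < n)
  have hm0 : (0 : ℝ) < n - 2 * r := by
    rw [sub_pos]; exact_mod_cast (by omega : 2 * r < n)
  have hL : 0 < L := by
    have : (1 : ℝ) ≤ r := by exact_mod_cast hr
    linarith
  have hrL' : ((r : ℝ) / (2 * L)) ^ 2 ≤ 1 :=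
    pow_le_one₀ (by positivity) ((div_le_one (by positivity)).2 hrL)
  have hB : (r / (exp 1 * (n - 2 * r))) ^ 2 * p⁻¹ ^ r / p⁻¹ ^ 3 ≤ a / p⁻¹ ^ 2 :=
    calc _ ≤ (r / (exp 1 * (n - 2 * r))) ^ 2 * (p⁻¹ * a ^ 2 * (exp 1 * n / (2 * L)) ^ 2) /
          p⁻¹ ^ 3 := by gcongr
      _ = (r / (2 * L)) ^ 2 * (a * (a * n ^ 2) / (n - 2 * r) ^ 2) / p⁻¹ ^ 2 := by
          field_simp
      _ ≤ 1 * (a * (n - 2 * r) ^ 2 / (n - 2 * r) ^ 2) / p⁻¹ ^ 2 := by gcongr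
      _ = a / p⁻¹ ^ 2 := by field_simp
  calc Ta n r p (r - 1, 0, 0, r - 1)
      ≤ exp 1 ^ 2 * p⁻¹ ^ 2 * r ^ 3 * n ^ 2 * (a / p⁻¹ ^ 2) ^ r := by
        grw [Ta_pred_zero_zero_pred_le hp hr hrn, hB]
    _ = exp 1 ^ 2 * p⁻¹ ^ 2 * r ^ 3 * n ^ 2 * a ^ r / (p⁻¹ ^ r) ^ 2 := by
        rw [div_pow, ← pow_mul, ← pow_mul, mul_comm 2 r]; ring
    _ ≤ exp 1 ^ 2 * p⁻¹ ^ 2 * r ^ 3 * n ^ 2 * a ^ r / (a ^ 2 * (exp 1 * n / (2 * L)) ^ 2) ^ 2 := by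
        gcongr
    _ = 16 * p⁻¹ ^ 2 / (exp 1 ^ 2 * a ^ 4) * (r ^ 3 * a ^ r) * (L ^ 4 / n ^ 2) := by
        field_simp
        ring

theorem Ta_nonneg {p : ℝ} (hp : 0 ≤ p) (n r : ℕ) (α : ℕ × ℕ × ℕ × ℕ) : 0 ≤ Ta n r p α := by
  obtain ⟨a, b, c, d⟩ := α
  unfold Ta Fa
  positivity

theorem rpow_zf {p : ℝ} (hp0 : 0 < p) (hp1 : p < 1) {n : ℕ} (hL : 0 < logb p⁻¹ n) :
    p⁻¹ ^ zf p n = p⁻¹ * (exp 1 * n / (2 * logb p⁻¹ n)) ^ 2 := by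
  have hq : 1 < p⁻¹ := (one_lt_inv₀ hp0).2 hp1
  have hn : (n : ℝ) ≠ 0 := by rintro h; simp [h] at hL
  have hzf : zf p n = logb p⁻¹ (p⁻¹ * (exp 1 * n / (2 * logb p⁻¹ n)) ^ 2) := by
    rw [logb_mul (by positivity) (by positivity), logb_pow, logb_self_eq_one hq,
      mul_div_mul_comm, logb_mul (by positivity) (by positivity), logb_div hn hL.ne', zf]
    push_cast
    ring
  rw [hzf, rpow_logb (by positivity) hq.ne' (by positivity)]

theorem inv_rpow_zf_sub {p : ℝ} (hp0 : 0 < p) (hp1 : p < 1) (ε : ℝ) {n : ℕ}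
    (hL : 0 < logb p⁻¹ n) :
    p⁻¹ ^ (zf p n - ε) = p⁻¹ * p ^ ε * (exp 1 * n / (2 * logb p⁻¹ n)) ^ 2 := by
  rw [sub_eq_add_neg, rpow_add (inv_pos.2 hp0), rpow_zf hp0 hp1 hL, inv_rpow hp0.le,
    rpow_neg hp0.le, inv_inv]
  ring

theorem inv_rpow_zf_sub_sub_one {p : ℝ} (hp0 : 0 < p) (hp1 : p < 1) (ε : ℝ) {n : ℕ}
    (hL : 0 < logb p⁻¹ n) :
    p⁻¹ ^ (zf p n - ε - 1) = p ^ ε * (exp 1 * n / (2 * logb p⁻¹ n)) ^ 2 := by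
  rw [sub_eq_add_neg, rpow_add (inv_pos.2 hp0), inv_rpow_zf_sub hp0 hp1 ε hL, rpow_neg_one,
    inv_inv]
  field_simp

theorem eventually_logb_le_mul (b : ℝ) {c : ℝ} (hc : 0 < c) :
    ∀ᶠ x : ℝ in atTop, logb b x ≤ c * x := by
  filter_upwards [isLittleO_logb_id_atTop.bound hc, eventually_ge_atTop 0] with x hx hx0
  rw [id, norm_of_nonneg hx0] at hx
  exact (le_norm_self _).trans hx

theorem eventually_zf_le {p : ℝ} (hp0 : 0 < p) (hp1 : p < 1) :
    ∀ᶠ n : ℕ in atTop, zf p n ≤ 2 * logb p⁻¹ n := by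
  have hq : 1 < p⁻¹ := (one_lt_inv₀ hp0).2 hp1
  have hL := (tendsto_logb_atTop hq).comp tendsto_natCast_atTop_atTop
  filter_upwards [((tendsto_logb_atTop hq).comp hL).eventually_ge_atTop
    (logb p⁻¹ (exp 1 / 2) + 1 / 2)] with n hn
  simp only [Function.comp_apply] at hn
  rw [zf]
  linarith

theorem tendsto_zf_atTop {p : ℝ} (hp0 : 0 < p) (hp1 : p < 1) :
    Tendsto (zf p) atTop atTop := by
  have hq : 1 < p⁻¹ := (one_lt_inv₀ hp0).2 hp1
  have hL := (tendsto_logb_atTop hq).comp tendsto_natCast_atTop_atTop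
  refine tendsto_atTop_mono' _ ?_
    (tendsto_atTop_add_const_right _ (2 * logb p⁻¹ (exp 1 / 2) + 1) hL)
  filter_upwards [hL.eventually (eventually_logb_le_mul p⁻¹ one_half_pos)] with n hn
  simp only [Function.comp_apply, zf] at hn ⊢
  linarith

theorem eventually_natFloor_zf_sub_le {p ε : ℝ} (hp0 : 0 < p) (hp1 : p < 1) (hε : 0 ≤ ε) :
    ∀ᶠ n : ℕ in atTop, (⌊zf p n - ε⌋₊ : ℝ) ≤ 2 * logb p⁻¹ n := by
  filter_upwards [eventually_zf_le hp0 hp1, (tendsto_zf_atTop hp0 hp1).eventually_ge_atTop ε]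
    with n hzL hz
  linarith [Nat.floor_le (sub_nonneg.2 hz)]

theorem eventually_Ta_pred_zero_zero_pred_le {p ε : ℝ} (hp0 : 0 < p) (hp1 : p < 1) (hε : 0 < ε) :
    ∃ C : ℝ, 0 < C ∧ ∀ᶠ n : ℕ in atTop,
      Ta n ⌊zf p n - ε⌋₊ p (⌊zf p n - ε⌋₊ - 1, 0, 0, ⌊zf p n - ε⌋₊ - 1) ≤
        C * logb p⁻¹ n ^ 4 / n ^ 2 := by
  have hq : 1 < p⁻¹ := (one_lt_inv₀ hp0).2 hp1
  have hba : (p ^ (ε / 4)) ^ 2 = p ^ (ε / 2) := by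
    rw [← rpow_natCast, ← rpow_mul hp0.le]; ring_nf
  have ha2 : (p ^ (ε / 2)) ^ 2 = p ^ ε := by
    rw [← rpow_natCast, ← rpow_mul hp0.le]; ring_nf
  set a := p ^ (ε / 2)
  set b := p ^ (ε / 4)
  have ha : 0 < a := rpow_pos_of_pos hp0 _
  have ha1 : |a| < 1 := by
    rw [abs_of_pos ha]; exact rpow_lt_one hp0.le hp1 (by positivity)
  have hb : 0 < b := rpow_pos_of_pos hp0 _
  have hb1 : b < 1 := rpow_lt_one hp0.le hp1 (by positivity)
  have hz := tendsto_zf_atTop hp0 hp1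
  have hL := (tendsto_logb_atTop hq).comp tendsto_natCast_atTop_atTop
  have hr : Tendsto (fun n : ℕ => ⌊zf p n - ε⌋₊) atTop atTop :=
    tendsto_nat_floor_atTop.comp (tendsto_atTop_add_const_right _ (-ε) hz)
  have hLn : ∀ᶠ n : ℕ in atTop, logb p⁻¹ n ≤ (1 - b) / 8 * n :=
    tendsto_natCast_atTop_atTop.eventually (eventually_logb_le_mul p⁻¹ (by linarith))
  refine ⟨16 * p⁻¹ ^ 2 / (exp 1 ^ 2 * a ^ 4), by positivity, ?_⟩
  filter_upwards [hL.eventually_gt_atTop 0, eventually_natFloor_zf_sub_le hp0 hp1 hε.le,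
    hz.eventually_ge_atTop (1 + ε), hLn,
    ((tendsto_pow_const_mul_const_pow_of_abs_lt_one 3 ha1).comp hr).eventually_le_const one_pos]
    with n hL hrL hz hLn hra
  simp only [Function.comp_apply] at hL hra
  set r := ⌊zf p n - ε⌋₊
  have hr1 : 1 ≤ r := Nat.le_floor (by push_cast; linarith)
  have hrn : (4 * r : ℝ) ≤ n := by nlinarith
  have hm : b * n ≤ n - 2 * r := by nlinarith
  calc Ta n r p (r - 1, 0, 0, r - 1)
      ≤ 16 * p⁻¹ ^ 2 / (exp 1 ^ 2 * a ^ 4) * (r ^ 3 * a ^ r) * (logb p⁻¹ n ^ 4 / n ^ 2) := by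
        refine Ta_pred_zero_zero_pred_le_of_bounds hp0 ha hr1 (by exact_mod_cast hrn) hrL
          ?_ ?_ ?_
        · rw [ha2, ← inv_rpow_zf_sub hp0 hp1 ε hL, ← rpow_natCast]
          exact rpow_le_rpow_of_exponent_le hq.le (Nat.floor_le (by linarith))
        · rw [ha2, ← inv_rpow_zf_sub_sub_one hp0 hp1 ε hL, ← rpow_natCast]
          exact rpow_le_rpow_of_exponent_le hq.le (by linarith [Nat.lt_floor_add_one (zf p n - ε)])
        · rw [← hba, ← mul_pow]
          exact pow_le_pow_left₀ (by positivity) hm 2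
    _ ≤ 16 * p⁻¹ ^ 2 / (exp 1 ^ 2 * a ^ 4) * 1 * (logb p⁻¹ n ^ 4 / n ^ 2) := by gcongr
    _ = _ := by ring

theorem stmt14_general (p ε : ℝ) (hp0 : 0 < p) (hp1 : p < 1) (hε : 0 < ε) :
    (∃ C'' : ℝ, 0 < C'' ∧ ∀ᶠ n : ℕ in atTop,
      Ta n ⌊zf p n - ε⌋.toNat p
          (⌊zf p n - ε⌋.toNat - 1, 0, 0, ⌊zf p n - ε⌋.toNat - 1) ≤
        C'' * (Real.logb p⁻¹ n) ^ 4 / (n : ℝ) ^ 2) ∧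
    Tendsto (fun n : ℕ => (⌊zf p n - ε⌋.toNat : ℝ) ^ 4 *
        Ta n ⌊zf p n - ε⌋.toNat p
          (⌊zf p n - ε⌋.toNat - 1, 0, 0, ⌊zf p n - ε⌋.toNat - 1))
      atTop (nhds 0) := by
  simp only [Int.floor_toNat]
  obtain ⟨C, hC, hT⟩ := eventually_Ta_pred_zero_zero_pred_le hp0 hp1 hε
  refine ⟨⟨C, hC, hT⟩, ?_⟩
  have hlim : Tendsto (fun n : ℕ => 16 * C * (logb p⁻¹ n ^ 4 / n) ^ 2) atTop (nhds 0) := by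
    have h := (((tendsto_pow_logb_div_mul_add_atTop (b := p⁻¹) 1 0 4 one_ne_zero).comp
      tendsto_natCast_atTop_atTop).pow 2).const_mul (16 * C)
    simpa [Function.comp_def] using h
  refine squeeze_zero' (.of_forall fun n => mul_nonneg (by positivity) (Ta_nonneg hp0.le _ _ _))
    ?_ hlim
  filter_upwards [hT, eventually_natFloor_zf_sub_le hp0 hp1 hε.le] with n hT hrL
  calc _ ≤ (2 * logb p⁻¹ n) ^ 4 * (C * logb p⁻¹ n ^ 4 / n ^ 2) := by
        gcongr
        exact Ta_nonneg hp0.le _ _ _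
    _ = 16 * C * (logb p⁻¹ n ^ 4 / n) ^ 2 := by ring

/-- For `r = r(n) = ⌊z(n,p) − ε⌋` there is a constant `C'' > 0` such that for all sufficiently
large `n`, `T_{(r−1,0,0,r−1)} ≤ C''·(log_q n)⁴/n²`; in particular
`r⁴·T_{(r−1,0,0,r−1)} → 0`. -/
theorem stmt14 (p ε : ℝ) (hp0 : 0 < p) (hp1 : p < 1) (hε : 0 < ε) (hε' : ε < 1/2) :
    (∃ C'' : ℝ, 0 < C'' ∧ ∀ᶠ n : ℕ in atTop,
      Ta n ⌊zf p n - ε⌋.toNat p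
          (⌊zf p n - ε⌋.toNat - 1, 0, 0, ⌊zf p n - ε⌋.toNat - 1) ≤
        C'' * (Real.logb p⁻¹ n) ^ 4 / (n : ℝ) ^ 2) ∧
    Tendsto (fun n : ℕ => (⌊zf p n - ε⌋.toNat : ℝ) ^ 4 *
        Ta n ⌊zf p n - ε⌋.toNat p
          (⌊zf p n - ε⌋.toNat - 1, 0, 0, ⌊zf p n - ε⌋.toNat - 1))
      atTop (nhds 0) :=
  stmt14_general p ε hp0 hp1 hε
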